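/- arXiv:2512.20749 — 4 statements merged into one kernel-verified Lean document; each statement's English description precedes it below -/
import Mathlib

section
/- Let d ∈ ℕ, n ≥ 2, let W_1,…,W_n be real d×d matrices, and let M, R > 0 satisfy ‖W_i‖ ≤ M (operator norm) for all i. Define the pairwise-averaged multimodal bilinear attention map Φ : (ℝ^d)^n → (ℝ^d)^n by Φ(v_1,…,v_n) = (α_1 v_1, …, α_n v_n), where a_{ij} = ⟨W_i v_i, W_j v_j⟩ for i ≠ j and α_i = (1/(n−1)) Σ_{j≠i} a_{ij}. Then for all tuples (v_1,…,v_n) and (ṽ_1,…,ṽ_n) with ‖v_i‖ ≤ R and ‖ṽ_i‖ ≤ R for every i, one has ‖Φ(v_1,…,v_n) − Φ(ṽ_1,…,ṽ_n)‖ ≤ 4 M² R² ‖(v_1 − ṽ_1, …, v_n − ṽ_n)‖, i.e., Φ is Lipschitz with constant 4M²R² on the set where all inputs have norm at most R. -/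
open scoped InnerProductSpace

/-- The pairwise-averaged bilinear attention coefficient
`α_i = (1/(n−1)) Σ_{j≠i} ⟨W_i v_i, W_j v_j⟩`. -/
noncomputable def attnCoeff {d n : ℕ}
    (W : Fin n → (EuclideanSpace ℝ (Fin d) →L[ℝ] EuclideanSpace ℝ (Fin d)))
    (v : PiLp 2 (fun _ : Fin n => EuclideanSpace ℝ (Fin d))) (i : Fin n) : ℝ :=
  (1 / ((n : ℝ) - 1)) * ∑ j ∈ Finset.univ.erase i, ⟪W i (v i), W j (v j)⟫_ℝ

/-- The pairwise-averaged multimodal bilinear attention map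
`Φ(v_1, …, v_n) = (α_1 v_1, …, α_n v_n)`. -/
noncomputable def attnMap {d n : ℕ}
    (W : Fin n → (EuclideanSpace ℝ (Fin d) →L[ℝ] EuclideanSpace ℝ (Fin d)))
    (v : PiLp 2 (fun _ : Fin n => EuclideanSpace ℝ (Fin d))) :
    PiLp 2 (fun _ : Fin n => EuclideanSpace ℝ (Fin d)) :=
  (WithLp.equiv 2 (∀ _ : Fin n, EuclideanSpace ℝ (Fin d))).symm
    (fun i => attnCoeff W v i • v i)

set_option maxHeartbeats 1000000 in
/-- on the set of tuples whose components all have norm at most `R`,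
the pairwise-averaged multimodal bilinear attention map is Lipschitz with
constant `4 M² R²`, where `M` bounds the operator norms of the `W_i`. -/
theorem attn_lipschitz (d n : ℕ) (hn : 2 ≤ n)
    (W : Fin n → (EuclideanSpace ℝ (Fin d) →L[ℝ] EuclideanSpace ℝ (Fin d)))
    (M R : ℝ) (hM : 0 < M) (hR : 0 < R) (hW : ∀ i, ‖W i‖ ≤ M) :
    ∀ v w : PiLp 2 (fun _ : Fin n => EuclideanSpace ℝ (Fin d)),
      (∀ i, ‖v i‖ ≤ R) → (∀ i, ‖w i‖ ≤ R) →
      ‖attnMap W v - attnMap W w‖ ≤ 4 * M ^ 2 * R ^ 2 * ‖v - w‖ := by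
  intro v w hv hw
  have hn2 : (2:ℝ) ≤ (n:ℝ) := by exact_mod_cast hn
  have hn1 : (1:ℝ) ≤ (n:ℝ) - 1 := by linarith
  have hn0 : (0:ℝ) < (n:ℝ) - 1 := by linarith
  have hcard : ∀ i : Fin n, (((Finset.univ : Finset (Fin n)).erase i).card : ℝ) = (n:ℝ) - 1 := by
    intro i
    rw [Finset.card_erase_of_mem (Finset.mem_univ i), Finset.card_univ, Fintype.card_fin]
    have hn1' : 1 ≤ n := by omega
    push_cast [hn1']
    ring
  obtain ⟨δ, hδeq⟩ : ∃ δ : Fin n → ℝ, ∀ i, δ i = ‖v i - w i‖ := ⟨_, fun _ => rfl⟩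
  obtain ⟨s, hseq⟩ : ∃ s : Fin n → ℝ,
      ∀ i, s i = (1/((n:ℝ)-1)) * ∑ j ∈ Finset.univ.erase i, δ j := ⟨_, fun _ => rfl⟩
  have hδ0 : ∀ i, 0 ≤ δ i := fun i => (hδeq i) ▸ norm_nonneg _
  have hs0 : ∀ i, 0 ≤ s i := by
    intro i
    rw [hseq i]
    exact mul_nonneg (by positivity) (Finset.sum_nonneg fun j _ => hδ0 j)
  have hWb : ∀ (i : Fin n) (x : EuclideanSpace ℝ (Fin d)), ‖W i x‖ ≤ M * ‖x‖ := by
    intro i x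
    calc ‖W i x‖ ≤ ‖W i‖ * ‖x‖ := (W i).le_opNorm x
    _ ≤ M * ‖x‖ := by gcongr; exact hW i
  have hWR : ∀ (i : Fin n) (x : EuclideanSpace ℝ (Fin d)), ‖x‖ ≤ R → ‖W i x‖ ≤ M * R := by
    intro i x hx
    calc ‖W i x‖ ≤ M * ‖x‖ := hWb i x
    _ ≤ M * R := by gcongr
  -- coefficient bound
  have key1 : ∀ i, |attnCoeff W v i| ≤ M^2 * R^2 := by
    intro i
    rw [attnCoeff, abs_mul, abs_of_pos (by positivity : (0:ℝ) < 1/((n:ℝ)-1))]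
    have h1 : |∑ j ∈ Finset.univ.erase i, ⟪W i (v i), W j (v j)⟫_ℝ|
        ≤ ((n:ℝ)-1) * (M^2 * R^2) := by
      calc |∑ j ∈ Finset.univ.erase i, ⟪W i (v i), W j (v j)⟫_ℝ|
          ≤ ∑ j ∈ Finset.univ.erase i, |⟪W i (v i), W j (v j)⟫_ℝ| :=
            Finset.abs_sum_le_sum_abs _ _
        _ ≤ ∑ j ∈ Finset.univ.erase i, M^2 * R^2 := by
            apply Finset.sum_le_sum
            intro j _
            calc |⟪W i (v i), W j (v j)⟫_ℝ| ≤ ‖W i (v i)‖ * ‖W j (v j)‖ :=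
                  abs_real_inner_le_norm _ _
              _ ≤ (M*R) * (M*R) := by
                  apply mul_le_mul (hWR i _ (hv i)) (hWR j _ (hv j)) (norm_nonneg _)
                  positivity
              _ = M^2 * R^2 := by ring
        _ = ((n:ℝ)-1) * (M^2 * R^2) := by rw [Finset.sum_const, nsmul_eq_mul, hcard]
    calc 1/((n:ℝ)-1) * |∑ j ∈ Finset.univ.erase i, ⟪W i (v i), W j (v j)⟫_ℝ|
        ≤ 1/((n:ℝ)-1) * (((n:ℝ)-1) * (M^2 * R^2)) := by gcongr
      _ = M^2 * R^2 := by field_simp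
  -- coefficient difference bound
  have key2 : ∀ i, |attnCoeff W v i - attnCoeff W w i| ≤ M^2 * R * (δ i + s i) := by
    intro i
    have hrw : attnCoeff W v i - attnCoeff W w i
        = (1/((n:ℝ)-1)) * ∑ j ∈ Finset.univ.erase i,
            (⟪W i (v i - w i), W j (v j)⟫_ℝ + ⟪W i (w i), W j (v j - w j)⟫_ℝ) := by
      rw [attnCoeff, attnCoeff, ← mul_sub, ← Finset.sum_sub_distrib]
      congr 1
      apply Finset.sum_congr rfl
      intro j _
      rw [map_sub, map_sub, inner_sub_left, inner_sub_right]
      ring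
    rw [hrw, abs_mul, abs_of_pos (by positivity : (0:ℝ) < 1/((n:ℝ)-1))]
    have h1 : |∑ j ∈ Finset.univ.erase i,
          (⟪W i (v i - w i), W j (v j)⟫_ℝ + ⟪W i (w i), W j (v j - w j)⟫_ℝ)|
        ≤ ∑ j ∈ Finset.univ.erase i, (M^2 * R * δ i + M^2 * R * δ j) := by
      refine (Finset.abs_sum_le_sum_abs _ _).trans (Finset.sum_le_sum fun j _ => ?_)
      refine (abs_add_le _ _).trans ?_
      have t1 : |⟪W i (v i - w i), W j (v j)⟫_ℝ| ≤ M^2 * R * δ i := by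
        calc |⟪W i (v i - w i), W j (v j)⟫_ℝ| ≤ ‖W i (v i - w i)‖ * ‖W j (v j)‖ :=
              abs_real_inner_le_norm _ _
          _ ≤ (M * ‖v i - w i‖) * (M * R) := by
              apply mul_le_mul (hWb i _) (hWR j _ (hv j)) (norm_nonneg _)
              positivity
          _ = M^2 * R * δ i := by rw [hδeq i]; ring
      have t2 : |⟪W i (w i), W j (v j - w j)⟫_ℝ| ≤ M^2 * R * δ j := by
        calc |⟪W i (w i), W j (v j - w j)⟫_ℝ| ≤ ‖W i (w i)‖ * ‖W j (v j - w j)‖ :=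
              abs_real_inner_le_norm _ _
          _ ≤ (M * R) * (M * ‖v j - w j‖) := by
              apply mul_le_mul (hWR i _ (hw i)) (hWb j _) (norm_nonneg _)
              positivity
          _ = M^2 * R * δ j := by rw [hδeq j]; ring
      linarith
    calc 1/((n:ℝ)-1) * |∑ j ∈ Finset.univ.erase i,
          (⟪W i (v i - w i), W j (v j)⟫_ℝ + ⟪W i (w i), W j (v j - w j)⟫_ℝ)|
        ≤ 1/((n:ℝ)-1) * ∑ j ∈ Finset.univ.erase i, (M^2 * R * δ i + M^2 * R * δ j) := by
          gcongr
      _ = M^2 * R * (δ i + s i) := by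
          rw [Finset.sum_add_distrib, Finset.sum_const, nsmul_eq_mul, hcard,
            ← Finset.mul_sum, hseq i]
          field_simp
  -- pointwise bound on the components
  have hpt : ∀ i, ‖attnCoeff W v i • v i - attnCoeff W w i • w i‖
      ≤ M^2 * R^2 * (2 * δ i + s i) := by
    intro i
    have hsplit : attnCoeff W v i • v i - attnCoeff W w i • w i
        = attnCoeff W v i • (v i - w i) + (attnCoeff W v i - attnCoeff W w i) • w i := by
      rw [smul_sub, sub_smul]; abel
    rw [hsplit]
    calc ‖attnCoeff W v i • (v i - w i) + (attnCoeff W v i - attnCoeff W w i) • w i‖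
        ≤ ‖attnCoeff W v i • (v i - w i)‖ + ‖(attnCoeff W v i - attnCoeff W w i) • w i‖ :=
          norm_add_le _ _
      _ = |attnCoeff W v i| * δ i + |attnCoeff W v i - attnCoeff W w i| * ‖w i‖ := by
          rw [norm_smul, norm_smul, Real.norm_eq_abs, Real.norm_eq_abs, ← hδeq i]
      _ ≤ (M^2 * R^2) * δ i + (M^2 * R * (δ i + s i)) * R := by
          apply add_le_add
          · exact mul_le_mul_of_nonneg_right (key1 i) (hδ0 i)
          · calc |attnCoeff W v i - attnCoeff W w i| * ‖w i‖
                ≤ (M^2 * R * (δ i + s i)) * ‖w i‖ :=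
                  mul_le_mul_of_nonneg_right (key2 i) (norm_nonneg _)
              _ ≤ (M^2 * R * (δ i + s i)) * R :=
                  mul_le_mul_of_nonneg_left (hw i)
                    (by have := hδ0 i; have := hs0 i; positivity)
      _ = M^2 * R^2 * (2 * δ i + s i) := by ring
  -- ℓ² assembly
  obtain ⟨Δ, hΔi⟩ : ∃ Δ : EuclideanSpace ℝ (Fin n), ∀ i, Δ i = δ i :=
    ⟨(WithLp.equiv 2 _).symm δ, fun _ => rfl⟩
  obtain ⟨S, hSi⟩ : ∃ S : EuclideanSpace ℝ (Fin n), ∀ i, S i = s i :=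
    ⟨(WithLp.equiv 2 _).symm s, fun _ => rfl⟩
  have hΔnorm : ‖Δ‖ = ‖v - w‖ := by
    rw [EuclideanSpace.norm_eq, PiLp.norm_eq_of_L2]
    congr 1
    apply Finset.sum_congr rfl
    intro i _
    rw [hΔi, Real.norm_eq_abs, abs_of_nonneg (hδ0 i), PiLp.sub_apply, hδeq i]
  have hSnorm : ‖S‖ ≤ ‖Δ‖ := by
    rw [EuclideanSpace.norm_eq, EuclideanSpace.norm_eq]
    apply Real.sqrt_le_sqrt
    have hterm : ∀ i, ‖S i‖^2 ≤ (1/((n:ℝ)-1)) * ∑ j ∈ Finset.univ.erase i, (δ j)^2 := by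
      intro i
      rw [hSi, hseq i, Real.norm_eq_abs, sq_abs, mul_pow]
      have hcs : (∑ j ∈ Finset.univ.erase i, δ j)^2
          ≤ ((n:ℝ)-1) * ∑ j ∈ Finset.univ.erase i, (δ j)^2 := by
        have := sq_sum_le_card_mul_sum_sq (s := Finset.univ.erase i) (f := δ)
        calc (∑ j ∈ Finset.univ.erase i, δ j)^2
            ≤ ((Finset.univ.erase i).card : ℝ) * ∑ j ∈ Finset.univ.erase i, (δ j)^2 := by
              exact_mod_cast this
          _ = ((n:ℝ)-1) * ∑ j ∈ Finset.univ.erase i, (δ j)^2 := by rw [hcard]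
      calc (1/((n:ℝ)-1))^2 * (∑ j ∈ Finset.univ.erase i, δ j)^2
          ≤ (1/((n:ℝ)-1))^2 * (((n:ℝ)-1) * ∑ j ∈ Finset.univ.erase i, (δ j)^2) := by
            gcongr
        _ = (1/((n:ℝ)-1)) * ∑ j ∈ Finset.univ.erase i, (δ j)^2 := by
            field_simp
    calc ∑ i, ‖S i‖^2 ≤ ∑ i, (1/((n:ℝ)-1)) * ∑ j ∈ Finset.univ.erase i, (δ j)^2 :=
          Finset.sum_le_sum fun i _ => hterm i
      _ = (1/((n:ℝ)-1)) * ∑ i, ∑ j ∈ Finset.univ.erase i, (δ j)^2 := by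
          rw [Finset.mul_sum]
      _ = (1/((n:ℝ)-1)) * ∑ i, ((∑ j, (δ j)^2) - (δ i)^2) := by
          congr 1
          exact Finset.sum_congr rfl fun i _ =>
            Finset.sum_erase_eq_sub (Finset.mem_univ i)
      _ = (1/((n:ℝ)-1)) * (((n:ℝ) - 1) * ∑ j, (δ j)^2) := by
          rw [Finset.sum_sub_distrib, Finset.sum_const, nsmul_eq_mul, Finset.card_univ,
            Fintype.card_fin]
          ring
      _ = ∑ j, (δ j)^2 := by field_simp
      _ = ∑ i, ‖Δ i‖^2 := by
          apply Finset.sum_congr rfl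
          intro i _
          rw [hΔi, Real.norm_eq_abs, sq_abs]
  -- final computation
  have hfin : ‖attnMap W v - attnMap W w‖ ≤ M^2 * R^2 * ‖(2:ℝ) • Δ + S‖ := by
    rw [PiLp.norm_eq_of_L2]
    have hcomp : ∀ i, (attnMap W v - attnMap W w) i
        = attnCoeff W v i • v i - attnCoeff W w i • w i := by
      intro i
      rw [PiLp.sub_apply]
      rfl
    have hineq : ∑ i, ‖(attnMap W v - attnMap W w) i‖^2
        ≤ (M^2 * R^2)^2 * ∑ i, ‖((2:ℝ) • Δ + S) i‖^2 := by
      rw [Finset.mul_sum]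
      apply Finset.sum_le_sum
      intro i _
      rw [hcomp i]
      have h2 : ((2:ℝ) • Δ + S) i = 2 * δ i + s i := by
        rw [PiLp.add_apply, PiLp.smul_apply, hΔi, hSi, smul_eq_mul]
      rw [h2, Real.norm_eq_abs, sq_abs]
      calc ‖attnCoeff W v i • v i - attnCoeff W w i • w i‖^2
          ≤ (M^2 * R^2 * (2 * δ i + s i))^2 := by
            apply sq_le_sq' _ (hpt i)
            have h0 : 0 ≤ M^2 * R^2 * (2 * δ i + s i) := by
              have := hδ0 i; have := hs0 i; positivity
            linarith [norm_nonneg (attnCoeff W v i • v i - attnCoeff W w i • w i)]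
        _ = (M^2 * R^2)^2 * (2 * δ i + s i)^2 := by ring
    calc Real.sqrt (∑ i, ‖(attnMap W v - attnMap W w) i‖^2)
        ≤ Real.sqrt ((M^2 * R^2)^2 * ∑ i, ‖((2:ℝ) • Δ + S) i‖^2) :=
          Real.sqrt_le_sqrt hineq
      _ = (M^2 * R^2) * Real.sqrt (∑ i, ‖((2:ℝ) • Δ + S) i‖^2) := by
          rw [Real.sqrt_mul (by positivity), Real.sqrt_sq (by positivity)]
      _ = M^2 * R^2 * ‖(2:ℝ) • Δ + S‖ := by rw [EuclideanSpace.norm_eq]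
  calc ‖attnMap W v - attnMap W w‖ ≤ M^2 * R^2 * ‖(2:ℝ) • Δ + S‖ := hfin
    _ ≤ M^2 * R^2 * (2 * ‖Δ‖ + ‖S‖) := by
        gcongr
        calc ‖(2:ℝ) • Δ + S‖ ≤ ‖(2:ℝ) • Δ‖ + ‖S‖ := norm_add_le _ _
          _ = 2 * ‖Δ‖ + ‖S‖ := by rw [norm_smul]; simp
    _ ≤ M^2 * R^2 * (2 * ‖Δ‖ + ‖Δ‖) := by gcongr
    _ = 3 * M^2 * R^2 * ‖v - w‖ := by rw [hΔnorm]; ring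
    _ ≤ 4 * M^2 * R^2 * ‖v - w‖ := by
        have h1 : (0:ℝ) ≤ ‖v - w‖ := norm_nonneg _
        have h2 : (0:ℝ) ≤ M^2 * R^2 := by positivity
        nlinarith
end

section
/- Let d ∈ ℕ, n ≥ 2, let W_1,…,W_n be real d×d matrices with ‖W_i‖ ≤ M (operator norm) for all i, where M ≤ 1/2, and let 0 < R ≤ 1. Then the pairwise-averaged multimodal bilinear attention map Φ(v_1,…,v_n) = (α_1 v_1,…,α_n v_n) is Lipschitz with constant 4M²R² ≤ 1 on the set of tuples with ‖v_i‖ ≤ R for all i; in particular, if M < 1/2 then this Lipschitz constant is strictly smaller than 1. -/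
open scoped InnerProductSpace

private lemma attn_aux1 {a b c : ℝ} (hb2 : b ^ 2 ≤ c) :
    (2 * a + b) ^ 2 ≤ 8 * a ^ 2 + 2 * c := by
  nlinarith [sq_nonneg (2 * a - b)]

private lemma attn_aux2 {x y : ℝ} (h : x ≤ y) (hx : 0 ≤ x) : x ^ 2 ≤ y ^ 2 :=
  pow_le_pow_left₀ hx h 2

private lemma attn_aux3 {a b : ℝ} (h : a ^ 2 ≤ b ^ 2) (ha : 0 ≤ a) (hb : 0 ≤ b) :
    a ≤ b := by
  rw [← Real.sqrt_sq ha, ← Real.sqrt_sq hb]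
  exact Real.sqrt_le_sqrt h

private lemma attn_aux4 (n : ℕ) (hn2 : (2:ℝ) ≤ (n:ℝ)) (u s : Fin n → ℝ) (U : ℝ)
    (hUsq : U ^ 2 = ∑ i, u i ^ 2)
    (hssq : ∀ i, s i ^ 2 ≤ U ^ 2 / ((n:ℝ)-1)) :
    ∑ i, (2 * u i + s i) ^ 2 ≤ 16 * U ^ 2 := by
  have hn0 : (0:ℝ) < (n:ℝ) - 1 := by linarith
  calc ∑ i, (2 * u i + s i) ^ 2
      ≤ ∑ i : Fin n, (8 * u i ^ 2 + 2 * (U ^ 2 / ((n:ℝ)-1))) :=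
        Finset.sum_le_sum fun i _ => attn_aux1 (hssq i)
    _ = 8 * U ^ 2 + (n:ℝ) * (2 * (U ^ 2 / ((n:ℝ)-1))) := by
        rw [Finset.sum_add_distrib, ← Finset.mul_sum, ← hUsq, Finset.sum_const,
          nsmul_eq_mul, Finset.card_univ, Fintype.card_fin]
    _ ≤ 16 * U ^ 2 := by
        have hq : (n:ℝ) / ((n:ℝ)-1) ≤ 2 := by
          rw [div_le_iff₀ hn0]; linarith
        have heq : (n:ℝ) * (2 * (U ^ 2 / ((n:ℝ)-1)))
            = 2 * U ^ 2 * ((n:ℝ) / ((n:ℝ)-1)) := by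
          field_simp
        nlinarith [sq_nonneg U]

set_option maxHeartbeats 1600000 in
/-- if the operator norms of the `W_i` are bounded by `M ≤ 1/2` and
`0 < R ≤ 1`, then the pairwise-averaged multimodal bilinear attention map is
Lipschitz with constant `4 M² R² ≤ 1` on the set of tuples whose components have
norm at most `R`; in particular if `M < 1/2` this constant is strictly less than `1`. -/
theorem attn_lipschitz_small (d n : ℕ) (hn : 2 ≤ n)
    (W : Fin n → (EuclideanSpace ℝ (Fin d) →L[ℝ] EuclideanSpace ℝ (Fin d)))
    (M R : ℝ) (hW : ∀ i, ‖W i‖ ≤ M) (hM : M ≤ 1 / 2) (hR0 : 0 < R) (hR1 : R ≤ 1) :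
    (∀ v w : PiLp 2 (fun _ : Fin n => EuclideanSpace ℝ (Fin d)),
      (∀ i, ‖v i‖ ≤ R) → (∀ i, ‖w i‖ ≤ R) →
      ‖attnMap W v - attnMap W w‖ ≤ 4 * M ^ 2 * R ^ 2 * ‖v - w‖) ∧
    4 * M ^ 2 * R ^ 2 ≤ 1 ∧
    (M < 1 / 2 → 4 * M ^ 2 * R ^ 2 < 1) := by
  have hM0 : 0 ≤ M := le_trans (norm_nonneg _) (hW ⟨0, by omega⟩)
  have hn2 : (2:ℝ) ≤ (n:ℝ) := by exact_mod_cast hn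
  have hn1 : (1:ℝ) ≤ (n:ℝ) - 1 := by linarith
  have hn0 : (0:ℝ) < (n:ℝ) - 1 := by linarith
  have hM2 : M ^ 2 ≤ 1 / 4 := by nlinarith
  have hR2 : R ^ 2 ≤ 1 := by nlinarith
  refine ⟨?_, by nlinarith [mul_le_mul_of_nonneg_right hM2 (sq_nonneg R), sq_nonneg M],
    fun h => by nlinarith [mul_le_mul_of_nonneg_right hM2 (sq_nonneg R), sq_nonneg M,
      mul_le_mul_of_nonneg_left hR2 (sq_nonneg M)]⟩
  intro v w hv hw
  set u : Fin n → ℝ := fun i => ‖v i - w i‖ with hu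
  have hu0 : ∀ i, 0 ≤ u i := fun i => norm_nonneg _
  set U : ℝ := ‖v - w‖ with hU
  have hU0 : 0 ≤ U := norm_nonneg _
  have hUsq : U ^ 2 = ∑ i, u i ^ 2 := by
    rw [hU, PiLp.norm_sq_eq_of_L2]
    exact Finset.sum_congr rfl fun i _ => rfl
  have hcard : ∀ i : Fin n, ((Finset.univ.erase i).card : ℝ) = (n:ℝ) - 1 := by
    intro i
    rw [Finset.card_erase_of_mem (Finset.mem_univ i), Finset.card_univ, Fintype.card_fin]
    have h1 : 1 ≤ n := by omega
    push_cast [h1]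
    ring
  have hWx : ∀ (j : Fin n) (x : EuclideanSpace ℝ (Fin d)), ‖x‖ ≤ R → ‖W j x‖ ≤ M * R := by
    intro j x hx
    calc ‖W j x‖ ≤ ‖W j‖ * ‖x‖ := (W j).le_opNorm x
    _ ≤ M * R := mul_le_mul (hW j) hx (norm_nonneg x) hM0
  have hWu : ∀ (j i : Fin n), ‖W j (v i - w i)‖ ≤ M * u i := by
    intro j i
    calc ‖W j (v i - w i)‖ ≤ ‖W j‖ * ‖v i - w i‖ := (W j).le_opNorm _
    _ ≤ M * u i := mul_le_mul_of_nonneg_right (hW j) (norm_nonneg _)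
  -- bound on the coefficient for v
  have hαv : ∀ i, |attnCoeff W v i| ≤ M ^ 2 * R ^ 2 := by
    intro i
    rw [attnCoeff, abs_mul, abs_of_pos (by positivity : (0:ℝ) < 1 / ((n:ℝ)-1))]
    have hsum : |∑ j ∈ Finset.univ.erase i, ⟪W i (v i), W j (v j)⟫_ℝ|
        ≤ ((n:ℝ) - 1) * (M ^ 2 * R ^ 2) := by
      calc |∑ j ∈ Finset.univ.erase i, ⟪W i (v i), W j (v j)⟫_ℝ|
          ≤ ∑ j ∈ Finset.univ.erase i, |⟪W i (v i), W j (v j)⟫_ℝ| :=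
            Finset.abs_sum_le_sum_abs _ _
        _ ≤ ∑ j ∈ Finset.univ.erase i, M ^ 2 * R ^ 2 := by
            refine Finset.sum_le_sum fun j _ => ?_
            calc |⟪W i (v i), W j (v j)⟫_ℝ| ≤ ‖W i (v i)‖ * ‖W j (v j)‖ :=
                abs_real_inner_le_norm _ _
            _ ≤ (M * R) * (M * R) :=
                mul_le_mul (hWx i _ (hv i)) (hWx j _ (hv j)) (norm_nonneg _)
                  (by positivity)
            _ = M ^ 2 * R ^ 2 := by ring
        _ = ((n:ℝ) - 1) * (M ^ 2 * R ^ 2) := by rw [Finset.sum_const, nsmul_eq_mul, hcard]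
    calc 1 / ((n:ℝ)-1) * |∑ j ∈ Finset.univ.erase i, ⟪W i (v i), W j (v j)⟫_ℝ|
        ≤ 1 / ((n:ℝ)-1) * (((n:ℝ) - 1) * (M ^ 2 * R ^ 2)) := by
          exact mul_le_mul_of_nonneg_left hsum (by positivity)
      _ = M ^ 2 * R ^ 2 := by field_simp
  -- the averaged deviation
  set s : Fin n → ℝ := fun i => ((n:ℝ)-1)⁻¹ * ∑ j ∈ Finset.univ.erase i, u j with hs
  have hs0 : ∀ i, 0 ≤ s i := by
    intro i
    exact mul_nonneg (by positivity) (Finset.sum_nonneg fun j _ => hu0 j)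
  -- bound on the coefficient difference
  have hβ : ∀ i, |attnCoeff W v i - attnCoeff W w i| ≤ M ^ 2 * R * (u i + s i) := by
    intro i
    have hdiff : attnCoeff W v i - attnCoeff W w i
        = (1 / ((n:ℝ)-1)) * ∑ j ∈ Finset.univ.erase i,
            (⟪W i (v i - w i), W j (v j)⟫_ℝ + ⟪W i (w i), W j (v j - w j)⟫_ℝ) := by
      rw [attnCoeff, attnCoeff, ← mul_sub, ← Finset.sum_sub_distrib]
      congr 1
      refine Finset.sum_congr rfl fun j _ => ?_
      rw [map_sub, map_sub, inner_sub_left, inner_sub_right]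
      ring
    rw [hdiff, abs_mul, abs_of_pos (by positivity : (0:ℝ) < 1 / ((n:ℝ)-1))]
    have hsum : |∑ j ∈ Finset.univ.erase i,
        (⟪W i (v i - w i), W j (v j)⟫_ℝ + ⟪W i (w i), W j (v j - w j)⟫_ℝ)|
        ≤ ∑ j ∈ Finset.univ.erase i, (M ^ 2 * R * (u i + u j)) := by
      refine le_trans (Finset.abs_sum_le_sum_abs _ _) (Finset.sum_le_sum fun j _ => ?_)
      calc |⟪W i (v i - w i), W j (v j)⟫_ℝ + ⟪W i (w i), W j (v j - w j)⟫_ℝ|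
          ≤ |⟪W i (v i - w i), W j (v j)⟫_ℝ| + |⟪W i (w i), W j (v j - w j)⟫_ℝ| :=
            abs_add_le _ _
        _ ≤ (M * u i) * (M * R) + (M * R) * (M * u j) := by
            refine add_le_add ?_ ?_
            · exact le_trans (abs_real_inner_le_norm _ _)
                (mul_le_mul (hWu i i) (hWx j _ (hv j)) (norm_nonneg _)
                  (mul_nonneg hM0 (hu0 i)))
            · exact le_trans (abs_real_inner_le_norm _ _)
                (mul_le_mul (hWx i _ (hw i)) (hWu j j) (norm_nonneg _)
                  (mul_nonneg hM0 hR0.le))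
        _ = M ^ 2 * R * (u i + u j) := by ring
    have hsum2 : ∑ j ∈ Finset.univ.erase i, (M ^ 2 * R * (u i + u j))
        = ((n:ℝ)-1) * (M ^ 2 * R * (u i + s i)) := by
      rw [hs]
      simp only [mul_add, Finset.sum_add_distrib, Finset.sum_const, nsmul_eq_mul, hcard,
        ← Finset.mul_sum]
      field_simp
    calc 1 / ((n:ℝ)-1) * |∑ j ∈ Finset.univ.erase i,
          (⟪W i (v i - w i), W j (v j)⟫_ℝ + ⟪W i (w i), W j (v j - w j)⟫_ℝ)|
        ≤ 1 / ((n:ℝ)-1) * (((n:ℝ)-1) * (M ^ 2 * R * (u i + s i))) := by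
          exact mul_le_mul_of_nonneg_left (hsum2 ▸ hsum) (by positivity)
      _ = M ^ 2 * R * (u i + s i) := by field_simp
  -- per-coordinate bound on the difference of the attention map
  have hkey : ∀ i, ‖(attnMap W v - attnMap W w) i‖ ≤ M ^ 2 * R ^ 2 * (2 * u i + s i) := by
    intro i
    have hDi : (attnMap W v - attnMap W w) i
        = attnCoeff W v i • (v i - w i) + (attnCoeff W v i - attnCoeff W w i) • w i := by
      show attnCoeff W v i • v i - attnCoeff W w i • w i = _
      rw [sub_smul, smul_sub]
      abel
    rw [hDi]
    calc ‖attnCoeff W v i • (v i - w i) + (attnCoeff W v i - attnCoeff W w i) • w i‖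
        ≤ ‖attnCoeff W v i • (v i - w i)‖ + ‖(attnCoeff W v i - attnCoeff W w i) • w i‖ :=
          norm_add_le _ _
      _ = |attnCoeff W v i| * u i + |attnCoeff W v i - attnCoeff W w i| * ‖w i‖ := by
          rw [norm_smul, norm_smul, Real.norm_eq_abs, Real.norm_eq_abs]
      _ ≤ (M ^ 2 * R ^ 2) * u i + (M ^ 2 * R * (u i + s i)) * R := by
          refine add_le_add (mul_le_mul_of_nonneg_right (hαv i) (hu0 i)) ?_
          exact mul_le_mul (hβ i) (hw i) (norm_nonneg _)
            (by positivity)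
      _ = M ^ 2 * R ^ 2 * (2 * u i + s i) := by ring
  -- bound on s i squared
  have hssq : ∀ i, s i ^ 2 ≤ U ^ 2 / ((n:ℝ)-1) := by
    intro i
    have h1 : (∑ j ∈ Finset.univ.erase i, u j) ^ 2
        ≤ ((n:ℝ)-1) * ∑ j ∈ Finset.univ.erase i, u j ^ 2 := by
      have := sq_sum_le_card_mul_sum_sq (s := Finset.univ.erase i) (f := u)
      calc (∑ j ∈ Finset.univ.erase i, u j) ^ 2
          ≤ ((Finset.univ.erase i).card : ℝ) * ∑ j ∈ Finset.univ.erase i, u j ^ 2 := by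
            exact_mod_cast this
        _ = ((n:ℝ)-1) * ∑ j ∈ Finset.univ.erase i, u j ^ 2 := by rw [hcard]
    have h2 : ∑ j ∈ Finset.univ.erase i, u j ^ 2 ≤ U ^ 2 := by
      rw [hUsq]
      exact Finset.sum_le_sum_of_subset_of_nonneg (Finset.subset_univ _)
        (fun j _ _ => sq_nonneg _)
    have : s i ^ 2 = (((n:ℝ)-1)⁻¹) ^ 2 * (∑ j ∈ Finset.univ.erase i, u j) ^ 2 := by
      rw [hs]; ring
    rw [this]
    calc (((n:ℝ)-1)⁻¹) ^ 2 * (∑ j ∈ Finset.univ.erase i, u j) ^ 2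
        ≤ (((n:ℝ)-1)⁻¹) ^ 2 * (((n:ℝ)-1) * U ^ 2) := by
          refine mul_le_mul_of_nonneg_left ?_ (by positivity)
          exact le_trans h1 (mul_le_mul_of_nonneg_left h2 (by positivity))
      _ = U ^ 2 / ((n:ℝ)-1) := by field_simp
  clear hu hU hs
  clear_value u s U
  -- summing the squares
  have hsumsq : ∑ i, (2 * u i + s i) ^ 2 ≤ 16 * U ^ 2 :=
    attn_aux4 n hn2 u s U hUsq hssq
  -- finishing
  have hfin : ‖attnMap W v - attnMap W w‖ ^ 2 ≤ (4 * M ^ 2 * R ^ 2 * U) ^ 2 := by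
    rw [PiLp.norm_sq_eq_of_L2]
    calc ∑ i, ‖(attnMap W v - attnMap W w) i‖ ^ 2
        ≤ ∑ i, (M ^ 2 * R ^ 2 * (2 * u i + s i)) ^ 2 := by
          refine Finset.sum_le_sum fun i _ => ?_
          exact attn_aux2 (hkey i) (norm_nonneg _)
      _ = (M ^ 2 * R ^ 2) ^ 2 * ∑ i, (2 * u i + s i) ^ 2 := by
          rw [Finset.mul_sum]
          exact Finset.sum_congr rfl fun i _ => by ring
      _ ≤ (M ^ 2 * R ^ 2) ^ 2 * (16 * U ^ 2) :=
          mul_le_mul_of_nonneg_left hsumsq (by positivity)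
      _ = (4 * M ^ 2 * R ^ 2 * U) ^ 2 := by ring
  exact attn_aux3 hfin (norm_nonneg _) (by positivity)
end

section
/- There exists an absolute constant c > 0 with the following property. Let d ∈ ℕ, n ≥ 2, let W_1,…,W_n be real d×d matrices with max_i ‖W_i‖ = M ≥ 1 (operator norm), and let R > 0. Let Φ : (ℝ^d)^n → (ℝ^d)^n be the pairwise-averaged multimodal bilinear attention map. Then the total derivative map v ↦ DΦ(v) (with values in continuous linear maps (ℝ^d)^n → (ℝ^d)^n, measured in operator norm) is Lipschitz on the set {(v_1,…,v_n) : ‖v_i‖ ≤ R for all i} with Lipschitz constant at most c · n · M³ · R. -/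
open scoped InnerProductSpace

/- ======================= auxiliary material ======================= -/

noncomputable section AttnAux

/-- component norm bound in `PiLp 2`. -/
lemma piLp2_apply_norm_le' {ι : Type*} [Fintype ι] {β : ι → Type*}
    [∀ i, SeminormedAddCommGroup (β i)] (x : PiLp 2 β) (i : ι) : ‖x i‖ ≤ ‖x‖ := by
  rw [PiLp.norm_eq_of_L2]
  calc ‖x i‖ = Real.sqrt (‖x i‖ ^ 2) := (Real.sqrt_sq (norm_nonneg _)).symm
    _ ≤ Real.sqrt (∑ j : ι, ‖x j‖ ^ 2) :=
      Real.sqrt_le_sqrt (Finset.single_le_sum (f := fun j => ‖x j‖ ^ 2)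
        (fun j _ => sq_nonneg _) (Finset.mem_univ i))

/-- The scaling bilinear map `S a v = (a_i • v_i)_i`. -/
def attnS (d n : ℕ) :
    (Fin n → ℝ) →L[ℝ] (PiLp 2 fun _ : Fin n => EuclideanSpace ℝ (Fin d)) →L[ℝ]
      (PiLp 2 fun _ : Fin n => EuclideanSpace ℝ (Fin d)) :=
  LinearMap.mkContinuous₂
    (LinearMap.mk₂ ℝ
      (fun a v => (WithLp.equiv 2 (∀ _ : Fin n, EuclideanSpace ℝ (Fin d))).symm
        fun i => a i • v i)
      (by intro a b v; ext i
          simp [WithLp.equiv_symm_apply, PiLp.toLp_apply, add_smul])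
      (by intro c a v; ext i
          simp [WithLp.equiv_symm_apply, PiLp.toLp_apply, mul_smul])
      (by intro a v w; ext i
          simp [WithLp.equiv_symm_apply, PiLp.toLp_apply, smul_add])
      (by intro c a v; ext i
          simp only [WithLp.equiv_symm_apply, PiLp.toLp_apply, PiLp.smul_apply]
          rw [smul_comm]))
    1
    (by
      intro a v
      rw [one_mul]
      rw [PiLp.norm_eq_of_L2]
      have h1 : ∀ i, ‖((WithLp.equiv 2 (∀ _ : Fin n, EuclideanSpace ℝ (Fin d))).symm
          (fun i => a i • v i)) i‖ ^ 2 ≤ ‖a‖ ^ 2 * ‖v i‖ ^ 2 := by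
        intro i
        rw [WithLp.equiv_symm_apply, PiLp.toLp_apply, norm_smul]
        have h2 : ‖a i‖ ≤ ‖a‖ := norm_le_pi_norm a i
        rw [mul_pow]
        exact mul_le_mul_of_nonneg_right (pow_le_pow_left₀ (norm_nonneg _) h2 2) (sq_nonneg _)
      calc Real.sqrt (∑ i, ‖((WithLp.equiv 2 (∀ _ : Fin n, EuclideanSpace ℝ (Fin d))).symm
            (fun i => a i • v i)) i‖ ^ 2)
          ≤ Real.sqrt (∑ i, ‖a‖ ^ 2 * ‖v i‖ ^ 2) :=
            Real.sqrt_le_sqrt (Finset.sum_le_sum fun i _ => h1 i)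
        _ = Real.sqrt (‖a‖ ^ 2 * ∑ i, ‖v i‖ ^ 2) := by rw [Finset.mul_sum]
        _ = ‖a‖ * Real.sqrt (∑ i, ‖v i‖ ^ 2) := by
            rw [Real.sqrt_mul (sq_nonneg _), Real.sqrt_sq (norm_nonneg _)]
        _ = ‖a‖ * ‖v‖ := by rw [PiLp.norm_eq_of_L2])

lemma attnS_apply_coord (d n : ℕ) (a : Fin n → ℝ)
    (v : PiLp 2 fun _ : Fin n => EuclideanSpace ℝ (Fin d)) (i : Fin n) :
    attnS d n a v i = a i • v i := rfl

lemma attnS_norm_le (d n : ℕ) (a : Fin n → ℝ)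
    (v : PiLp 2 fun _ : Fin n => EuclideanSpace ℝ (Fin d)) :
    ‖attnS d n a v‖ ≤ ‖a‖ * ‖v‖ := by
  have h1 := (attnS d n).le_opNorm₂ a v
  have h : ‖attnS d n‖ ≤ 1 := LinearMap.mkContinuous₂_norm_le _ zero_le_one _
  nlinarith [norm_nonneg a, norm_nonneg v, norm_nonneg (attnS d n a v),
    mul_nonneg (norm_nonneg a) (norm_nonneg v)]

/-- The quadratic-coefficient bilinear map. -/
def attnB (d n : ℕ) (W : Fin n → (EuclideanSpace ℝ (Fin d) →L[ℝ] EuclideanSpace ℝ (Fin d)))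
    (M : ℝ) (hn : 2 ≤ n) (hM : ∀ i, ‖W i‖ ≤ M) :
    (PiLp 2 fun _ : Fin n => EuclideanSpace ℝ (Fin d)) →L[ℝ]
      (PiLp 2 fun _ : Fin n => EuclideanSpace ℝ (Fin d)) →L[ℝ] (Fin n → ℝ) :=
  LinearMap.mkContinuous₂
    (LinearMap.mk₂ ℝ
      (fun u x i => (1 / ((n : ℝ) - 1)) * ∑ j ∈ Finset.univ.erase i, ⟪W i (u i), W j (x j)⟫_ℝ)
      (by intro u u' x; funext i
          simp [PiLp.add_apply, inner_add_left, Finset.sum_add_distrib, mul_add])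
      (by intro c u x; funext i
          simp only [PiLp.smul_apply, map_smul, real_inner_smul_left, Pi.smul_apply,
            smul_eq_mul, ← Finset.mul_sum]
          ring)
      (by intro u x x'; funext i
          simp [PiLp.add_apply, inner_add_right, Finset.sum_add_distrib, mul_add])
      (by intro c u x; funext i
          simp only [PiLp.smul_apply, map_smul, real_inner_smul_right, Pi.smul_apply,
            smul_eq_mul, ← Finset.mul_sum]
          ring))
    (M ^ 2)
    (by
      intro u x
      have hM0 : 0 ≤ M := le_trans (norm_nonneg (W ⟨0, lt_of_lt_of_le two_pos hn⟩)) (hM _)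
      have hn1 : (1 : ℝ) ≤ (n : ℝ) - 1 := by
        have : (2 : ℝ) ≤ (n : ℝ) := by exact_mod_cast hn
        linarith
      have hc : 0 ≤ 1 / ((n : ℝ) - 1) := by positivity
      refine (pi_norm_le_iff_of_nonneg (by positivity)).mpr fun i => ?_
      rw [LinearMap.mk₂_apply]
      rw [Real.norm_eq_abs]
      dsimp only
      rw [abs_mul, abs_of_nonneg hc]
      have hterm : ∀ j ∈ Finset.univ.erase i,
          |⟪W i (u i), W j (x j)⟫_ℝ| ≤ (M * ‖u‖) * (M * ‖x‖) := by
        intro j _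
        calc |⟪W i (u i), W j (x j)⟫_ℝ| ≤ ‖W i (u i)‖ * ‖W j (x j)‖ :=
              abs_real_inner_le_norm _ _
          _ ≤ (M * ‖u‖) * (M * ‖x‖) := by
              have h1 : ‖W i (u i)‖ ≤ M * ‖u‖ :=
                ((W i).le_opNorm (u i)).trans
                  (mul_le_mul (hM i) (piLp2_apply_norm_le' u i) (norm_nonneg _) hM0)
              have h2 : ‖W j (x j)‖ ≤ M * ‖x‖ :=
                ((W j).le_opNorm (x j)).trans
                  (mul_le_mul (hM j) (piLp2_apply_norm_le' x j) (norm_nonneg _) hM0)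
              exact mul_le_mul h1 h2 (norm_nonneg _) (by positivity)
      have hcard : ((Finset.univ.erase i).card : ℝ) = (n : ℝ) - 1 := by
        rw [Finset.card_erase_of_mem (Finset.mem_univ i), Finset.card_univ, Fintype.card_fin]
        have h1 : 1 ≤ n := le_trans one_le_two hn
        push_cast [Nat.cast_sub h1]
        ring
      calc (1 / ((n : ℝ) - 1)) * |∑ j ∈ Finset.univ.erase i, ⟪W i (u i), W j (x j)⟫_ℝ|
          ≤ (1 / ((n : ℝ) - 1)) *
            (((Finset.univ.erase i).card : ℝ) * ((M * ‖u‖) * (M * ‖x‖))) := by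
            refine mul_le_mul_of_nonneg_left ?_ hc
            refine (Finset.abs_sum_le_sum_abs _ _).trans ?_
            have := Finset.sum_le_card_nsmul (Finset.univ.erase i)
              (fun j => |⟪W i (u i), W j (x j)⟫_ℝ|) ((M * ‖u‖) * (M * ‖x‖)) hterm
            simpa [nsmul_eq_mul] using this
        _ = M ^ 2 * ‖u‖ * ‖x‖ := by
            rw [hcard]
            field_simp)

lemma attnB_apply_coord (d n : ℕ)
    (W : Fin n → (EuclideanSpace ℝ (Fin d) →L[ℝ] EuclideanSpace ℝ (Fin d)))
    (M : ℝ) (hn : 2 ≤ n) (hM : ∀ i, ‖W i‖ ≤ M)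
    (u x : PiLp 2 fun _ : Fin n => EuclideanSpace ℝ (Fin d)) (i : Fin n) :
    attnB d n W M hn hM u x i =
      (1 / ((n : ℝ) - 1)) * ∑ j ∈ Finset.univ.erase i, ⟪W i (u i), W j (x j)⟫_ℝ := rfl

lemma attnB_norm_le (d n : ℕ)
    (W : Fin n → (EuclideanSpace ℝ (Fin d) →L[ℝ] EuclideanSpace ℝ (Fin d)))
    (M : ℝ) (hn : 2 ≤ n) (hM : ∀ i, ‖W i‖ ≤ M)
    (u x : PiLp 2 fun _ : Fin n => EuclideanSpace ℝ (Fin d)) :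
    ‖attnB d n W M hn hM u x‖ ≤ M ^ 2 * ‖u‖ * ‖x‖ := by
  have h1 := (attnB d n W M hn hM).le_opNorm₂ u x
  have h : ‖attnB d n W M hn hM‖ ≤ M ^ 2 :=
    LinearMap.mkContinuous₂_norm_le _ (by positivity) _
  nlinarith [norm_nonneg u, norm_nonneg x, norm_nonneg (attnB d n W M hn hM u x),
    mul_nonneg (norm_nonneg u) (norm_nonneg x)]

end AttnAux

set_option maxHeartbeats 1000000 in
theorem attn_fderiv_lipschitz :
    ∃ c : ℝ, 0 < c ∧
      ∀ (d n : ℕ), 2 ≤ n →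
        ∀ (W : Fin n → (EuclideanSpace ℝ (Fin d) →L[ℝ] EuclideanSpace ℝ (Fin d)))
          (M R : ℝ),
          IsGreatest (Set.range fun i => ‖W i‖) M → 1 ≤ M → 0 < R →
          ∀ v w : PiLp 2 (fun _ : Fin n => EuclideanSpace ℝ (Fin d)),
            (∀ i, ‖v i‖ ≤ R) → (∀ i, ‖w i‖ ≤ R) →
            ‖fderiv ℝ (attnMap W) v - fderiv ℝ (attnMap W) w‖ ≤
              c * n * M ^ 3 * R * ‖v - w‖ := by
  refine ⟨6, by norm_num, ?_⟩
  intro d n hn W M R hMg hM1 hR v w hv hw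
  have hM : ∀ i, ‖W i‖ ≤ M := fun i => hMg.2 ⟨i, rfl⟩
  have hM0 : (0 : ℝ) ≤ M := le_trans zero_le_one hM1
  have hsn : Real.sqrt n ≤ (n : ℝ) := by
    have h1 : (n : ℝ) ≤ ((n : ℝ)) ^ 2 := by
      have : (1 : ℝ) ≤ (n : ℝ) := by exact_mod_cast le_trans one_le_two hn
      nlinarith
    calc Real.sqrt n ≤ Real.sqrt ((n : ℝ) ^ 2) := Real.sqrt_le_sqrt h1
      _ = (n : ℝ) := Real.sqrt_sq (Nat.cast_nonneg n)
  have hMsq : M ^ 2 * Real.sqrt n ≤ (n : ℝ) * M ^ 3 := by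
    have h1 : M ^ 2 * Real.sqrt n ≤ M ^ 2 * (n : ℝ) :=
      mul_le_mul_of_nonneg_left hsn (by positivity)
    have h3 : M ^ 2 ≤ M ^ 3 := pow_le_pow_right₀ hM1 (by norm_num)
    have h2 : M ^ 2 * (n : ℝ) ≤ M ^ 3 * (n : ℝ) :=
      mul_le_mul_of_nonneg_right h3 (Nat.cast_nonneg n)
    linarith
  set S := attnS d n with hSdef
  set B := attnB d n W M hn hM with hBdef
  have hS : ∀ a u, ‖S a u‖ ≤ ‖a‖ * ‖u‖ := attnS_norm_le d n
  have hB : ∀ u x, ‖B u x‖ ≤ M ^ 2 * ‖u‖ * ‖x‖ := attnB_norm_le d n W M hn hM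
  -- rewrite the map
  have hfun : attnMap W = fun v => S (B v v) v := by
    funext v
    ext i
    rw [hSdef, hBdef]
    rw [attnS_apply_coord, attnB_apply_coord]
    simp only [attnMap, attnCoeff, WithLp.equiv_symm_apply, PiLp.toLp_apply]
  -- derivative
  have hD : ∀ v : PiLp 2 (fun _ : Fin n => EuclideanSpace ℝ (Fin d)),
      HasFDerivAt (fun v => S (B v v) v)
        (S.precompR (PiLp 2 (fun _ : Fin n => EuclideanSpace ℝ (Fin d))) (B v v)
            (ContinuousLinearMap.id ℝ _) +
          S.precompL (PiLp 2 (fun _ : Fin n => EuclideanSpace ℝ (Fin d)))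
            (B.precompR (PiLp 2 (fun _ : Fin n => EuclideanSpace ℝ (Fin d))) v
                (ContinuousLinearMap.id ℝ _) +
              B.precompL (PiLp 2 (fun _ : Fin n => EuclideanSpace ℝ (Fin d)))
                (ContinuousLinearMap.id ℝ _) v) v) v := by
    intro v
    have h2 : HasFDerivAt (fun v => B v v)
        (B.precompR (PiLp 2 (fun _ : Fin n => EuclideanSpace ℝ (Fin d))) v
            (ContinuousLinearMap.id ℝ _) +
          B.precompL (PiLp 2 (fun _ : Fin n => EuclideanSpace ℝ (Fin d)))
            (ContinuousLinearMap.id ℝ _) v) v :=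
      B.hasFDerivAt_of_bilinear (hasFDerivAt_id v) (hasFDerivAt_id v)
    exact S.hasFDerivAt_of_bilinear h2 (hasFDerivAt_id v)
  haveI : ContinuousSMul ℝ (PiLp 2 fun _ : Fin n => EuclideanSpace ℝ (Fin d)) := IsBoundedSMul.continuousSMul
  have happ : ∀ (v h : PiLp 2 (fun _ : Fin n => EuclideanSpace ℝ (Fin d))),
      fderiv ℝ (attnMap W) v h = S (B v v) h + (S (B v h) v + S (B h v) v) := by
    intro v h
    rw [hfun, (hD v).fderiv]
    simp [ContinuousLinearMap.precompR, ContinuousLinearMap.precompL]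
  -- size bounds
  have hrv : ∀ (u : PiLp 2 (fun _ : Fin n => EuclideanSpace ℝ (Fin d))),
      (∀ i, ‖u i‖ ≤ R) → ‖u‖ ≤ Real.sqrt n * R := by
    intro u hu
    rw [PiLp.norm_eq_of_L2]
    calc Real.sqrt (∑ i, ‖u i‖ ^ 2) ≤ Real.sqrt (∑ _i : Fin n, R ^ 2) :=
          Real.sqrt_le_sqrt (Finset.sum_le_sum fun i _ =>
            pow_le_pow_left₀ (norm_nonneg _) (hu i) 2)
      _ = Real.sqrt ((n : ℝ) * R ^ 2) := by
          rw [Finset.sum_const, Finset.card_univ, Fintype.card_fin, nsmul_eq_mul]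
      _ = Real.sqrt n * R := by
          rw [Real.sqrt_mul (Nat.cast_nonneg n), Real.sqrt_sq hR.le]
  have hv' : ‖v‖ ≤ Real.sqrt n * R := hrv v hv
  have hw' : ‖w‖ ≤ Real.sqrt n * R := hrv w hw
  have key : ∀ (a b c : PiLp 2 (fun _ : Fin n => EuclideanSpace ℝ (Fin d))),
      ‖S (B a b) c‖ ≤ M ^ 2 * ‖a‖ * ‖b‖ * ‖c‖ := by
    intro a b c
    calc ‖S (B a b) c‖ ≤ ‖B a b‖ * ‖c‖ := hS _ _
      _ ≤ M ^ 2 * ‖a‖ * ‖b‖ * ‖c‖ :=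
        mul_le_mul_of_nonneg_right (hB a b) (norm_nonneg c)
  refine ContinuousLinearMap.opNorm_le_bound _ (by positivity) fun h => ?_
  have hexp : (fderiv ℝ (attnMap W) v - fderiv ℝ (attnMap W) w) h =
      (S (B (v - w) v) h + S (B w (v - w)) h) + (S (B (v - w) h) v + S (B h (v - w)) v)
        + (S (B w h) (v - w) + S (B h w) (v - w)) := by
    rw [ContinuousLinearMap.sub_apply, happ v h, happ w h]
    simp only [map_sub, map_add, ContinuousLinearMap.sub_apply, ContinuousLinearMap.add_apply]
    abel
  set K := M ^ 2 * (Real.sqrt n * R) * ‖v - w‖ * ‖h‖ with hK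
  have t1 : ‖S (B (v - w) v) h‖ ≤ K := by
    calc ‖S (B (v - w) v) h‖ ≤ M ^ 2 * ‖v - w‖ * ‖v‖ * ‖h‖ := key _ _ _
      _ ≤ M ^ 2 * ‖v - w‖ * (Real.sqrt n * R) * ‖h‖ := by gcongr
      _ = K := by rw [hK]; ring
  have t2 : ‖S (B w (v - w)) h‖ ≤ K := by
    calc ‖S (B w (v - w)) h‖ ≤ M ^ 2 * ‖w‖ * ‖v - w‖ * ‖h‖ := key _ _ _
      _ ≤ M ^ 2 * (Real.sqrt n * R) * ‖v - w‖ * ‖h‖ := by gcongr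
      _ = K := by rw [hK]
  have t3 : ‖S (B (v - w) h) v‖ ≤ K := by
    calc ‖S (B (v - w) h) v‖ ≤ M ^ 2 * ‖v - w‖ * ‖h‖ * ‖v‖ := key _ _ _
      _ ≤ M ^ 2 * ‖v - w‖ * ‖h‖ * (Real.sqrt n * R) := by gcongr
      _ = K := by rw [hK]; ring
  have t4 : ‖S (B h (v - w)) v‖ ≤ K := by
    calc ‖S (B h (v - w)) v‖ ≤ M ^ 2 * ‖h‖ * ‖v - w‖ * ‖v‖ := key _ _ _
      _ ≤ M ^ 2 * ‖h‖ * ‖v - w‖ * (Real.sqrt n * R) := by gcongr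
      _ = K := by rw [hK]; ring
  have t5 : ‖S (B w h) (v - w)‖ ≤ K := by
    calc ‖S (B w h) (v - w)‖ ≤ M ^ 2 * ‖w‖ * ‖h‖ * ‖v - w‖ := key _ _ _
      _ ≤ M ^ 2 * (Real.sqrt n * R) * ‖h‖ * ‖v - w‖ := by gcongr
      _ = K := by rw [hK]; ring
  have t6 : ‖S (B h w) (v - w)‖ ≤ K := by
    calc ‖S (B h w) (v - w)‖ ≤ M ^ 2 * ‖h‖ * ‖w‖ * ‖v - w‖ := key _ _ _
      _ ≤ M ^ 2 * ‖h‖ * (Real.sqrt n * R) * ‖v - w‖ := by gcongr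
      _ = K := by rw [hK]; ring
  have hsum : ‖(fderiv ℝ (attnMap W) v - fderiv ℝ (attnMap W) w) h‖ ≤ 6 * K := by
    rw [hexp]
    calc ‖(S (B (v - w) v) h + S (B w (v - w)) h)
          + (S (B (v - w) h) v + S (B h (v - w)) v)
          + (S (B w h) (v - w) + S (B h w) (v - w))‖
        ≤ ‖S (B (v - w) v) h + S (B w (v - w)) h‖
          + ‖S (B (v - w) h) v + S (B h (v - w)) v‖
          + ‖S (B w h) (v - w) + S (B h w) (v - w)‖ := norm_add₃_le
      _ ≤ (‖S (B (v - w) v) h‖ + ‖S (B w (v - w)) h‖)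
          + (‖S (B (v - w) h) v‖ + ‖S (B h (v - w)) v‖)
          + (‖S (B w h) (v - w)‖ + ‖S (B h w) (v - w)‖) := by
            gcongr <;> exact norm_add_le _ _
      _ ≤ (K + K) + (K + K) + (K + K) := by gcongr
      _ = 6 * K := by ring
  refine hsum.trans ?_
  rw [hK]
  calc 6 * (M ^ 2 * (Real.sqrt n * R) * ‖v - w‖ * ‖h‖)
      = (M ^ 2 * Real.sqrt n) * (6 * R * ‖v - w‖ * ‖h‖) := by ring
    _ ≤ ((n : ℝ) * M ^ 3) * (6 * R * ‖v - w‖ * ‖h‖) :=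
        mul_le_mul_of_nonneg_right hMsq (by positivity)
    _ = 6 * (n : ℝ) * M ^ 3 * R * ‖v - w‖ * ‖h‖ := by ring
end

section
/- Let d ∈ ℕ, n ≥ 2, let W_1,…,W_n be real d×d matrices with operator norms at most M, and let (v_1,…,v_n), (ṽ_1,…,ṽ_n) ∈ (ℝ^d)^n with ‖v_j‖ ≤ R and ‖ṽ_j‖ ≤ R for all j. For each i set α_i = (1/(n−1)) Σ_{j≠i} ⟨W_i v_i, W_j v_j⟩ and α̃_i = (1/(n−1)) Σ_{j≠i} ⟨W_i ṽ_i, W_j ṽ_j⟩, and let S = Σ_{k=1}^n ‖v_k − ṽ_k‖. Then for every i, the i-th fused output blocks satisfy ‖α_i v_i − α̃_i ṽ_i‖ ≤ M² R² ( 2‖v_i − ṽ_i‖ + S/(n−1) ). -/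
open scoped InnerProductSpace

/-- if all `‖W_j‖ ≤ M` and all components of `v, ṽ` have norm at most `R`,
then the fused output blocks satisfy
`‖α_i v_i − α̃_i ṽ_i‖ ≤ M² R² (2‖v_i − ṽ_i‖ + S/(n−1))` with `S = Σ_k ‖v_k − ṽ_k‖`. -/
theorem attn_block_perturbation (d n : ℕ) (hn : 2 ≤ n)
    (W : Fin n → (EuclideanSpace ℝ (Fin d) →L[ℝ] EuclideanSpace ℝ (Fin d)))
    (M R : ℝ) (hW : ∀ i, ‖W i‖ ≤ M)
    (v w : PiLp 2 (fun _ : Fin n => EuclideanSpace ℝ (Fin d)))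
    (hv : ∀ j, ‖v j‖ ≤ R) (hw : ∀ j, ‖w j‖ ≤ R) :
    ∀ i, ‖attnCoeff W v i • v i - attnCoeff W w i • w i‖ ≤
      M ^ 2 * R ^ 2 *
        (2 * ‖v i - w i‖ + (∑ k, ‖v k - w k‖) / ((n : ℝ) - 1)) := by
  intro i
  have hn1 : (1:ℝ) ≤ (n:ℝ) - 1 := by
    have h2 : (2:ℝ) ≤ (n:ℝ) := by exact_mod_cast hn
    linarith
  have hn1pos : (0:ℝ) < (n:ℝ) - 1 := by linarith
  have hM0 : 0 ≤ M := le_trans (norm_nonneg _) (hW i)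
  have hR0 : 0 ≤ R := le_trans (norm_nonneg _) (hv i)
  set E := Finset.univ.erase i with hE
  set D : Fin n → ℝ := fun k => ‖v k - w k‖ with hDdef
  set S : ℝ := ∑ k, ‖v k - w k‖ with hSdef
  have hD0 : ∀ k, 0 ≤ D k := fun k => norm_nonneg _
  have hS0 : 0 ≤ S := Finset.sum_nonneg fun k _ => norm_nonneg _
  have hSE : ∑ j ∈ E, D j ≤ S := by
    apply Finset.sum_le_sum_of_subset_of_nonneg (Finset.erase_subset _ _)
    intro k _ _; exact hD0 k
  have hcardR : ((E.card : ℕ) : ℝ) = (n:ℝ) - 1 := by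
    rw [hE, Finset.card_erase_of_mem (Finset.mem_univ i), Finset.card_univ,
      Fintype.card_fin]
    have h1 : 1 ≤ n := by omega
    push_cast [h1]
    ring
  have hWx : ∀ (j : Fin n) (x : EuclideanSpace ℝ (Fin d)) (r : ℝ),
      ‖x‖ ≤ r → ‖W j x‖ ≤ M * r := by
    intro j x r hx
    calc ‖W j x‖ ≤ ‖W j‖ * ‖x‖ := (W j).le_opNorm x
    _ ≤ M * r := mul_le_mul (hW j) hx (norm_nonneg _) hM0
  -- bound on |α_i|
  have halpha : |attnCoeff W v i| ≤ M ^ 2 * R ^ 2 := by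
    unfold attnCoeff
    rw [abs_mul, abs_of_pos (by positivity : (0:ℝ) < 1 / ((n:ℝ) - 1))]
    have hsum : |∑ j ∈ E, ⟪W i (v i), W j (v j)⟫_ℝ| ≤ ((n:ℝ) - 1) * (M ^ 2 * R ^ 2) := by
      calc |∑ j ∈ E, ⟪W i (v i), W j (v j)⟫_ℝ|
          ≤ ∑ j ∈ E, |⟪W i (v i), W j (v j)⟫_ℝ| := Finset.abs_sum_le_sum_abs _ _
        _ ≤ ∑ _j ∈ E, M ^ 2 * R ^ 2 := by
            apply Finset.sum_le_sum
            intro j _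
            calc |⟪W i (v i), W j (v j)⟫_ℝ| ≤ ‖W i (v i)‖ * ‖W j (v j)‖ :=
                abs_real_inner_le_norm _ _
              _ ≤ (M * R) * (M * R) :=
                mul_le_mul (hWx i _ R (hv i)) (hWx j _ R (hv j)) (norm_nonneg _)
                  (by positivity)
              _ = M ^ 2 * R ^ 2 := by ring
        _ = ((n:ℝ) - 1) * (M ^ 2 * R ^ 2) := by
            rw [Finset.sum_const, nsmul_eq_mul, hcardR]
    calc 1 / ((n:ℝ) - 1) * |∑ j ∈ E, ⟪W i (v i), W j (v j)⟫_ℝ|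
        ≤ 1 / ((n:ℝ) - 1) * (((n:ℝ) - 1) * (M ^ 2 * R ^ 2)) := by
          apply mul_le_mul_of_nonneg_left hsum (by positivity)
      _ = M ^ 2 * R ^ 2 := by field_simp
  -- bound on |α_i - α̃_i|
  have hdiff : |attnCoeff W v i - attnCoeff W w i|
      ≤ M ^ 2 * R * D i + M ^ 2 * R * (S / ((n:ℝ) - 1)) := by
    have hsplit : attnCoeff W v i - attnCoeff W w i
        = (1 / ((n:ℝ) - 1)) *
          ∑ j ∈ E, (⟪W i (v i), W j (v j)⟫_ℝ - ⟪W i (w i), W j (w j)⟫_ℝ) := by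
      unfold attnCoeff
      rw [← mul_sub, ← Finset.sum_sub_distrib]
    have hterm : ∀ j ∈ E,
        |⟪W i (v i), W j (v j)⟫_ℝ - ⟪W i (w i), W j (w j)⟫_ℝ|
          ≤ M ^ 2 * R * (D i + D j) := by
      intro j _
      have hs : ⟪W i (v i), W j (v j)⟫_ℝ - ⟪W i (w i), W j (w j)⟫_ℝ
          = ⟪W i (v i - w i), W j (v j)⟫_ℝ + ⟪W i (w i), W j (v j - w j)⟫_ℝ := by
        rw [map_sub, map_sub, inner_sub_left, inner_sub_right]
        ring
      rw [hs]
      calc |⟪W i (v i - w i), W j (v j)⟫_ℝ + ⟪W i (w i), W j (v j - w j)⟫_ℝ|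
          ≤ |⟪W i (v i - w i), W j (v j)⟫_ℝ| + |⟪W i (w i), W j (v j - w j)⟫_ℝ| :=
            abs_add_le _ _
        _ ≤ ‖W i (v i - w i)‖ * ‖W j (v j)‖ + ‖W i (w i)‖ * ‖W j (v j - w j)‖ :=
            add_le_add (abs_real_inner_le_norm _ _) (abs_real_inner_le_norm _ _)
        _ ≤ (M * D i) * (M * R) + (M * R) * (M * D j) := by
            apply add_le_add
            · exact mul_le_mul (hWx i _ _ le_rfl) (hWx j _ R (hv j)) (norm_nonneg _)
                (by positivity)
            · exact mul_le_mul (hWx i _ R (hw i)) (hWx j _ _ le_rfl) (norm_nonneg _)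
                (by positivity)
        _ = M ^ 2 * R * (D i + D j) := by ring
    have hsum : |∑ j ∈ E, (⟪W i (v i), W j (v j)⟫_ℝ - ⟪W i (w i), W j (w j)⟫_ℝ)|
        ≤ ((n:ℝ) - 1) * (M ^ 2 * R * D i) + M ^ 2 * R * S := by
      calc |∑ j ∈ E, (⟪W i (v i), W j (v j)⟫_ℝ - ⟪W i (w i), W j (w j)⟫_ℝ)|
          ≤ ∑ j ∈ E, |⟪W i (v i), W j (v j)⟫_ℝ - ⟪W i (w i), W j (w j)⟫_ℝ| :=
            Finset.abs_sum_le_sum_abs _ _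
        _ ≤ ∑ j ∈ E, M ^ 2 * R * (D i + D j) := Finset.sum_le_sum hterm
        _ = ((n:ℝ) - 1) * (M ^ 2 * R * D i) + M ^ 2 * R * ∑ j ∈ E, D j := by
            simp only [mul_add, Finset.sum_add_distrib, Finset.sum_const,
              nsmul_eq_mul, hcardR, ← Finset.mul_sum]
        _ ≤ ((n:ℝ) - 1) * (M ^ 2 * R * D i) + M ^ 2 * R * S := by
            have : M ^ 2 * R * ∑ j ∈ E, D j ≤ M ^ 2 * R * S :=
              mul_le_mul_of_nonneg_left hSE (by positivity)
            linarith
    rw [hsplit, abs_mul, abs_of_pos (by positivity : (0:ℝ) < 1 / ((n:ℝ) - 1))]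
    calc 1 / ((n:ℝ) - 1) * |∑ j ∈ E, (⟪W i (v i), W j (v j)⟫_ℝ - ⟪W i (w i), W j (w j)⟫_ℝ)|
        ≤ 1 / ((n:ℝ) - 1) * (((n:ℝ) - 1) * (M ^ 2 * R * D i) + M ^ 2 * R * S) :=
          mul_le_mul_of_nonneg_left hsum (by positivity)
      _ = M ^ 2 * R * D i + M ^ 2 * R * (S / ((n:ℝ) - 1)) := by
          field_simp
  -- combine
  have hkey : attnCoeff W v i • v i - attnCoeff W w i • w i
      = attnCoeff W v i • (v i - w i) + (attnCoeff W v i - attnCoeff W w i) • w i := by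
    rw [smul_sub, sub_smul]
    abel
  rw [hkey]
  calc ‖attnCoeff W v i • (v i - w i) + (attnCoeff W v i - attnCoeff W w i) • w i‖
      ≤ ‖attnCoeff W v i • (v i - w i)‖ + ‖(attnCoeff W v i - attnCoeff W w i) • w i‖ :=
        norm_add_le _ _
    _ = |attnCoeff W v i| * D i + |attnCoeff W v i - attnCoeff W w i| * ‖w i‖ := by
        rw [norm_smul, norm_smul, Real.norm_eq_abs, Real.norm_eq_abs]
    _ ≤ (M ^ 2 * R ^ 2) * D i
        + (M ^ 2 * R * D i + M ^ 2 * R * (S / ((n:ℝ) - 1))) * R := by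
        apply add_le_add
        · exact mul_le_mul_of_nonneg_right halpha (hD0 i)
        · exact mul_le_mul hdiff (hw i) (norm_nonneg _) (by positivity)
    _ = M ^ 2 * R ^ 2 * (2 * D i + S / ((n:ℝ) - 1)) := by ring
end
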